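/- Let F be a field, A a unital associative F-algebra, and v ∈ A such that for every k ≥ 1 there exists z ∈ A with ad_v^k(z) = 1. Let n ≥ 1, r ∈ ℕ, and let λ : S_n × B_r → F be a family of scalars, not all zero. Then for every a ∈ A_∞(v) there exist x_1, …, x_n ∈ A such that a = Σ_{σ ∈ S_n} Σ_{b ∈ B_r} λ_{σ,b} · ∏_{j=1}^n ad_v^{b_{σ(j)}}(x_{σ(j)}). (That is, A_∞(v) is contained in the image of every nonzero admissible partially commutative polynomial of type one; in particular, if ad_v is surjective this gives surjectivity on A.) -/

import Mathlib

/-!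
A word `[(i₁, e₁), …, (iₘ, eₘ)]` stands for `ad_v^e₁(x i₁) ⋯ ad_v^eₘ(x iₘ)`, so the polynomial is a
nonzero combination of words, each listing every variable once, of total exponent `r`. We show by
induction on the set of variables that any such combination takes the value `a`. For one variable
it is `κ • ad_v^r(x)`, and `a` has an `r`-th preimage under `ad_v`. Otherwise fix a variable `i`,
let `c` be the least exponent it carries, and substitute `v^k z` with `ad_v^c z = 1`: its
derivatives vanish above order `c` and equal `v^k` at order `c`, so only the words with exponent
`c` at `i` survive, as products `P v^k S`. Moving the `v`'s to the right with
`v y = y v + ad_v(y)` and choosing `k` least such that the word combination `∑ P · (ad_v)^k S` is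
nonzero, every term still containing a `v` cancels and we are left with a nonzero combination of
words in the remaining variables, with total exponent `r - c + k`. Such a `k` exists: for `k` large,
raising the first letter of an extremal `S` by `k` produces a word with no other preimage.
-/

/-- The inner derivation `ad_v : x ↦ v*x - x*v`. -/
def adE {A : Type*} [Ring A] (v : A) : A → A := fun x => v * x - x * v

section Derivation

variable {A : Type*} [Ring A] {v : A}

theorem adE_iterate_zero (v : A) (k : ℕ) : (adE v)^[k] 0 = 0 :=
  Function.iterate_fixed (by simp [adE]) k

theorem adE_eq_zero {w : A} (h : Commute v w) : adE v w = 0 :=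
  sub_eq_zero.2 h.eq

theorem adE_mul (v x y : A) : adE v (x * y) = adE v x * y + x * adE v y := by
  simp only [adE, sub_mul, mul_sub, mul_assoc]
  abel

theorem adE_iterate_mul_left {w : A} (h : Commute v w) (k : ℕ) (x : A) :
    (adE v)^[k] (w * x) = w * (adE v)^[k] x := by
  induction k generalizing x with
  | zero => rfl
  | succ k ih =>
    rw [Function.iterate_succ_apply, Function.iterate_succ_apply, adE_mul,
      adE_eq_zero h, zero_mul, zero_add, ih]

theorem adE_iterate_smul {R : Type*} [CommSemiring R] [Algebra R A] (k : ℕ) (c : R) (x : A) :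
    (adE v)^[k] (c • x) = c • (adE v)^[k] x := by
  induction k generalizing x with
  | zero => rfl
  | succ k ih =>
    rw [Function.iterate_succ_apply, Function.iterate_succ_apply, ← ih]
    simp only [adE, mul_smul_comm, smul_mul_assoc, smul_sub]

theorem adE_iterate_pow_mul {z : A} {c : ℕ} (hz : (adE v)^[c] z = 1) (k : ℕ) :
    (adE v)^[c] (v ^ k * z) = v ^ k ∧ ∀ e, c < e → (adE v)^[e] (v ^ k * z) = 0 := by
  have hc : (adE v)^[c] (v ^ k * z) = v ^ k := by
    rw [adE_iterate_mul_left ((Commute.refl v).pow_right k), hz, mul_one]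
  refine ⟨hc, fun e hce => ?_⟩
  obtain ⟨m, rfl⟩ := Nat.exists_eq_add_of_lt hce
  rw [add_assoc, add_comm, Function.iterate_add_apply, Function.iterate_succ_apply, hc,
    adE_eq_zero ((Commute.refl v).pow_right k), adE_iterate_zero]

end Derivation

abbrev AdWord (n : ℕ) := List (Fin n × ℕ)

namespace AdWord

variable {n : ℕ}

def weight (w : AdWord n) : ℕ := (w.map Prod.snd).sum

def bump (ℓ : ℕ) (w : AdWord n) : AdWord n := w.modify ℓ fun p => (p.1, p.2 + 1)

@[simp] theorem weight_nil : weight ([] : AdWord n) = 0 := rfl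

@[simp] theorem weight_cons (p : Fin n × ℕ) (w : AdWord n) : weight (p :: w) = p.2 + weight w :=
  List.sum_cons

theorem weight_append (w w' : AdWord n) : weight (w ++ w') = weight w + weight w' := by
  simp [weight]

@[simp] theorem bump_zero_cons (p : Fin n × ℕ) (w : AdWord n) :
    bump 0 (p :: w) = (p.1, p.2 + 1) :: w := rfl

@[simp] theorem bump_succ_cons (ℓ : ℕ) (p : Fin n × ℕ) (w : AdWord n) :
    bump (ℓ + 1) (p :: w) = p :: bump ℓ w := rfl

theorem weight_bump {ℓ : ℕ} {w : AdWord n} (h : ℓ < w.length) :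
    weight (bump ℓ w) = weight w + 1 := by
  induction w generalizing ℓ with
  | nil => simp at h
  | cons p t ih =>
    cases ℓ with
    | zero => simp only [bump_zero_cons, weight_cons]; ring
    | succ ℓ => simp only [bump_succ_cons, weight_cons, ih (Nat.lt_of_succ_lt_succ h)]; ring

def Below (w w' : AdWord n) : Prop := List.Forall₂ (fun p q => p.1 = q.1 ∧ p.2 ≤ q.2) w w'

namespace Below

theorem refl (w : AdWord n) : Below w w :=
  List.forall₂_same.2 fun _ _ => ⟨rfl, le_rfl⟩

theorem trans {w₁ w₂ w₃ : AdWord n} (h₁₂ : Below w₁ w₂) (h₂₃ : Below w₂ w₃) : Below w₁ w₃ := by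
  induction h₁₂ generalizing w₃ with
  | nil => exact h₂₃
  | cons h _ ih =>
    obtain _ | ⟨h', t'⟩ := h₂₃
    exact .cons ⟨h.1.trans h'.1, h.2.trans h'.2⟩ (ih t')

theorem map_fst {w w' : AdWord n} (h : Below w w') : w.map Prod.fst = w'.map Prod.fst := by
  induction h with
  | nil => rfl
  | cons h _ ih => simp [h.1, ih]

theorem weight_le {w w' : AdWord n} (h : Below w w') : weight w ≤ weight w' := by
  induction h with
  | nil => rfl
  | cons h _ ih => simp only [weight_cons]; omega

theorem eq_of_weight_le {w w' : AdWord n} (h : Below w w') (hw : weight w' ≤ weight w) :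
    w = w' := by
  induction h with
  | nil => rfl
  | cons h t ih =>
    simp only [weight_cons] at hw
    have := weight_le t
    rw [Prod.ext h.1 (by omega : _ = _), ih (by omega)]

theorem append {w₁ w₂ w₁' w₂' : AdWord n} (h₁ : Below w₁ w₁') (h₂ : Below w₂ w₂') :
    Below (w₁ ++ w₂) (w₁' ++ w₂') :=
  List.rel_append h₁ h₂

theorem eq_cons_of_weight_eq {w T : AdWord n} {i : Fin n} {e k : ℕ}
    (h : Below w ((i, e + k) :: T)) (hw : weight ((i, e + k) :: T) = weight w + k)
    (he : (w.map Prod.snd).headD 0 ≤ e) : w = (i, e) :: T := by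
  obtain _ | @⟨p, _, T', _, hp, hT⟩ := h
  simp only [List.map_cons, List.headD_cons] at he
  simp only [weight_cons] at hw
  have := weight_le hT
  rw [eq_of_weight_le hT (by omega), show p = (i, e) from Prod.ext hp.1 (show p.2 = e by omega)]

end Below

theorem below_bump (ℓ : ℕ) (w : AdWord n) : Below w (bump ℓ w) := by
  induction w generalizing ℓ with
  | nil => simp [bump, Below]
  | cons p t ih =>
    cases ℓ with
    | zero => exact .cons ⟨rfl, Nat.le_succ _⟩ (Below.refl t)
    | succ ℓ => exact .cons ⟨rfl, le_rfl⟩ (ih ℓ)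

def Enumerates (s : Finset (Fin n)) (w : AdWord n) : Prop :=
  (w.map Prod.fst).Nodup ∧ (w.map Prod.fst).toFinset = s

theorem Enumerates.mem_map_fst {s : Finset (Fin n)} {w : AdWord n} (h : Enumerates s w)
    {i : Fin n} (hi : i ∈ s) : i ∈ w.map Prod.fst := by
  rwa [← List.mem_toFinset, h.2]

theorem Enumerates.of_below {s : Finset (Fin n)} {w w' : AdWord n} (h : Enumerates s w)
    (hb : Below w w') : Enumerates s w' := by
  rwa [Enumerates, ← hb.map_fst]

theorem Enumerates.notMem {s : Finset (Fin n)} {P S : AdWord n} {i : Fin n} {e : ℕ}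
    (h : Enumerates s (P ++ (i, e) :: S)) : i ∉ P.map Prod.fst ∧ i ∉ S.map Prod.fst := by
  have := h.1
  simp only [List.map_append, List.map_cons, List.nodup_middle, List.nodup_cons,
    List.mem_append, not_or] at this
  exact this.1

theorem Enumerates.erase {s : Finset (Fin n)} {P S : AdWord n} {i : Fin n} {e : ℕ}
    (h : Enumerates s (P ++ (i, e) :: S)) : Enumerates (s.erase i) (P ++ S) := by
  obtain ⟨hnd, rfl⟩ := h
  unfold Enumerates
  simp only [List.map_append, List.map_cons, List.nodup_middle, List.nodup_cons,
    List.mem_append, not_or] at hnd ⊢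
  refine ⟨hnd.2, ?_⟩
  rw [List.toFinset_append, List.toFinset_append, List.toFinset_cons, Finset.erase_union_distrib,
    Finset.erase_insert (by simpa using hnd.1.2),
    Finset.erase_eq_of_notMem (by simpa using hnd.1.1)]

theorem Enumerates.eq_singleton {i : Fin n} {w : AdWord n} (h : Enumerates {i} w) :
    w = [(i, weight w)] := by
  have hlen := List.toFinset_card_of_nodup h.1
  rw [h.2, Finset.card_singleton, List.length_map] at hlen
  obtain ⟨p, rfl⟩ := List.length_eq_one_iff.1 hlen.symm
  have hp : p.1 = i := by simpa using h.2
  simp [← hp]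

def expOf (i : Fin n) : AdWord n → ℕ
  | [] => 0
  | p :: w => if p.1 = i then p.2 else expOf i w

def cut (i : Fin n) : AdWord n → AdWord n × AdWord n
  | [] => ([], [])
  | p :: w => if p.1 = i then ([], w) else (p :: (cut i w).1, (cut i w).2)

theorem eq_cut_append {i : Fin n} {w : AdWord n} (h : i ∈ w.map Prod.fst) :
    w = (cut i w).1 ++ (i, expOf i w) :: (cut i w).2 := by
  induction w with
  | nil => simp at h
  | cons p t ih =>
    by_cases hp : p.1 = i
    · obtain ⟨j, e⟩ := p
      subst hp
      simp [cut, expOf]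
    · simp only [List.map_cons, List.mem_cons, Ne.symm hp, false_or] at h
      simp only [cut, expOf, hp, if_false, List.cons_append]
      exact congrArg _ (ih h)

section Eval

variable {A : Type*} [Ring A]

def eval (v : A) (x : Fin n → A) (w : AdWord n) : A :=
  (w.map fun p => (adE v)^[p.2] (x p.1)).prod

variable (v : A) (x : Fin n → A)

@[simp] theorem eval_nil : eval v x [] = 1 := rfl

@[simp] theorem eval_cons (p : Fin n × ℕ) (w : AdWord n) :
    eval v x (p :: w) = (adE v)^[p.2] (x p.1) * eval v x w :=
  List.prod_cons

theorem eval_append (w w' : AdWord n) : eval v x (w ++ w') = eval v x w * eval v x w' := by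
  simp [eval]

theorem eval_update_of_notMem {i : Fin n} (g : A) {w : AdWord n} (h : i ∉ w.map Prod.fst) :
    eval v (Function.update x i g) w = eval v x w := by
  induction w with
  | nil => rfl
  | cons p t ih =>
    simp only [List.map_cons, List.mem_cons, not_or] at h
    rw [eval_cons, eval_cons, ih h.2, Function.update_of_ne (Ne.symm h.1)]

theorem mul_eval (w : AdWord n) :
    v * eval v x w = eval v x w * v + ∑ ℓ ∈ Finset.range w.length, eval v x (bump ℓ w) := by
  induction w with
  | nil => simp
  | cons p t ih =>
    have hp : v * (adE v)^[p.2] (x p.1) =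
        (adE v)^[p.2] (x p.1) * v + (adE v)^[p.2 + 1] (x p.1) := by
      rw [Function.iterate_succ_apply', adE]; abel
    rw [eval_cons, ← mul_assoc, hp, add_mul, mul_assoc, ih, List.length_cons,
      Finset.sum_range_succ']
    simp only [bump_succ_cons, bump_zero_cons, eval_cons, mul_add, Finset.mul_sum, mul_assoc]
    abel

theorem eval_update_of_enumerates {s : Finset (Fin n)} {i : Fin n} (hi : i ∈ s)
    {w : AdWord n} (hw : Enumerates s w) (g : A) :
    eval v (Function.update x i g) w =
      eval v x (cut i w).1 * ((adE v)^[expOf i w] g * eval v x (cut i w).2) := by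
  have hsplit := eq_cut_append (hw.mem_map_fst hi)
  rw [hsplit] at hw
  conv_lhs => rw [hsplit]
  rw [eval_append, eval_cons, Function.update_self, eval_update_of_notMem _ _ _ hw.notMem.1,
    eval_update_of_notMem _ _ _ hw.notMem.2]

end Eval

section Linear

variable (R : Type*) [CommSemiring R]

noncomputable def derivRight : (AdWord n × AdWord n →₀ R) →ₗ[R] (AdWord n × AdWord n →₀ R) :=
  Finsupp.lsum R fun s => ∑ ℓ ∈ Finset.range s.2.length, Finsupp.lsingle (s.1, bump ℓ s.2)

noncomputable def concat : (AdWord n × AdWord n →₀ R) →ₗ[R] (AdWord n →₀ R) :=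
  Finsupp.lmapDomain R R fun s => s.1 ++ s.2

variable {A : Type*} [Ring A] [Algebra R A] (v : A) (x : Fin n → A)

noncomputable def evalLin : (AdWord n →₀ R) →ₗ[R] A :=
  Finsupp.linearCombination R (eval v x)

noncomputable def sandwich (k : ℕ) : (AdWord n × AdWord n →₀ R) →ₗ[R] A :=
  Finsupp.linearCombination R fun s => eval v x s.1 * (v ^ k * eval v x s.2)

variable {R}

theorem derivRight_single (s : AdWord n × AdWord n) (c : R) :
    derivRight R (Finsupp.single s c) =
      ∑ ℓ ∈ Finset.range s.2.length, Finsupp.single (s.1, bump ℓ s.2) c := by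
  simp [derivRight]

theorem sandwich_zero (μ : AdWord n × AdWord n →₀ R) :
    sandwich R v x 0 μ = evalLin R v x (concat R μ) := by
  rw [evalLin, concat, Finsupp.lmapDomain_apply, Finsupp.linearCombination_mapDomain, sandwich]
  congr 1
  ext s
  simp [eval_append]

theorem sandwich_succ (k : ℕ) (μ : AdWord n × AdWord n →₀ R) :
    sandwich R v x (k + 1) μ = sandwich R v x k μ * v + sandwich R v x k (derivRight R μ) := by
  induction μ using Finsupp.induction_linear with
  | zero => simp
  | add μ ν hμ hν => simp only [map_add, hμ, hν, add_mul]; abel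
  | single s c =>
    simp only [sandwich, derivRight_single, map_sum, Finsupp.linearCombination_single,
      smul_mul_assoc, ← smul_add, ← Finset.smul_sum]
    rw [pow_succ, mul_assoc, mul_eval]
    simp only [mul_add, Finset.mul_sum, mul_assoc]

theorem sandwich_eq_evalLin_concat {k : ℕ} {μ : AdWord n × AdWord n →₀ R}
    (h : ∀ j < k, concat R ((derivRight R ^ j) μ) = 0) :
    sandwich R v x k μ = evalLin R v x (concat R ((derivRight R ^ k) μ)) := by
  induction k generalizing μ with
  | zero => exact sandwich_zero v x μ
  | succ k ih =>
    have h' : ∀ j < k, concat R ((derivRight R ^ j) (derivRight R μ)) = 0 := fun j hj => by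
      rw [← Module.End.mul_apply, ← pow_succ]
      exact h (j + 1) (by omega)
    rw [sandwich_succ, ih fun j hj => h j (by omega), h k (by omega), map_zero, zero_mul,
      zero_add, ih h', ← Module.End.mul_apply, ← pow_succ]

theorem exists_of_mem_support_derivRight {μ : AdWord n × AdWord n →₀ R}
    {t : AdWord n × AdWord n} (ht : t ∈ (derivRight R μ).support) :
    ∃ s ∈ μ.support, ∃ ℓ < s.2.length, t = (s.1, bump ℓ s.2) := by
  classical
  rw [← Finsupp.sum_single μ, map_finsuppSum] at ht
  obtain ⟨s, hs, ht⟩ := Finset.mem_biUnion.1 (Finsupp.support_finsetSum ht)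
  simp only [derivRight_single] at ht
  obtain ⟨ℓ, hℓ, ht⟩ := Finset.mem_biUnion.1 (Finsupp.support_finsetSum ht)
  exact ⟨s, hs, ℓ, Finset.mem_range.1 hℓ, Finset.mem_singleton.1 (Finsupp.support_single_subset ht)⟩

theorem exists_of_mem_support_derivRight_pow {k : ℕ} {μ : AdWord n × AdWord n →₀ R}
    {t : AdWord n × AdWord n} (ht : t ∈ ((derivRight R ^ k) μ).support) :
    ∃ s ∈ μ.support, t.1 = s.1 ∧ Below s.2 t.2 ∧ weight t.2 = weight s.2 + k := by
  induction k generalizing t with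
  | zero => exact ⟨t, ht, rfl, Below.refl _, rfl⟩
  | succ k ih =>
    rw [pow_succ', Module.End.mul_apply] at ht
    obtain ⟨t', ht', ℓ, hℓ, rfl⟩ := exists_of_mem_support_derivRight ht
    obtain ⟨s, hs, h₁, hb, hw⟩ := ih ht'
    exact ⟨s, hs, h₁, hb.trans (below_bump ℓ _), by rw [weight_bump hℓ, hw]; ring⟩

theorem exists_of_mem_support_concat_derivRight_pow {k : ℕ} {μ : AdWord n × AdWord n →₀ R}
    {w : AdWord n} (hw : w ∈ (concat R ((derivRight R ^ k) μ)).support) :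
    ∃ s ∈ μ.support, Below (s.1 ++ s.2) w ∧ weight w = weight (s.1 ++ s.2) + k := by
  classical
  obtain ⟨t, ht, rfl⟩ := Finset.mem_image.1 (Finsupp.mapDomain_support hw)
  obtain ⟨s, hs, h₁, hb, hwt⟩ := exists_of_mem_support_derivRight_pow ht
  refine ⟨s, hs, h₁ ▸ (Below.refl _).append hb, ?_⟩
  rw [weight_append, weight_append, hwt, h₁]
  ring

/-- The coefficient is `1` in every characteristic: all `k` raises land on the first letter in
exactly one way. -/
theorem derivRight_pow_single_apply (k : ℕ) (P T : AdWord n) (i : Fin n) (e : ℕ) (c : R) :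
    (derivRight R ^ k) (Finsupp.single (P, (i, e) :: T) c) (P, (i, e + k) :: T) = c := by
  induction k generalizing e with
  | zero => simp
  | succ k ih =>
    rw [pow_succ, Module.End.mul_apply, derivRight_single, map_sum, Finsupp.finsetSum_apply,
      List.length_cons, Finset.sum_range_succ', Finset.sum_eq_zero, zero_add, bump_zero_cons,
      ← add_assoc, add_right_comm, ih]
    intro ℓ _
    by_contra hne
    obtain ⟨s, hs, -, hb, hw⟩ :=
      exists_of_mem_support_derivRight_pow (Finsupp.mem_support_iff.2 hne)
    obtain rfl := Finset.mem_singleton.1 (Finsupp.support_single_subset hs)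
    simp only [bump_succ_cons] at hb hw
    rw [← add_assoc, add_right_comm] at hb hw
    simpa using hb.eq_cons_of_weight_eq hw (by simp)

theorem concat_apply_of_unique {ν : AdWord n × AdWord n →₀ R} {t₀ : AdWord n × AdWord n}
    (h : ∀ t ∈ ν.support, t.1 ++ t.2 = t₀.1 ++ t₀.2 → t = t₀) :
    concat R ν (t₀.1 ++ t₀.2) = ν t₀ := by
  classical
  rw [concat, Finsupp.lmapDomain_apply, Finsupp.mapDomain, Finsupp.sum_apply, Finsupp.sum,
    Finset.sum_eq_single t₀]
  · simp
  · intro t ht hne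
    rw [Finsupp.single_apply, if_neg fun h' => hne (h t ht h')]
  · intro h0
    simp [Finsupp.notMem_support_iff.1 h0]

theorem derivRight_pow_apply_cons_add {μ : AdWord n × AdWord n →₀ R} {P T : AdWord n}
    {i : Fin n} {e : ℕ} (k : ℕ)
    (hmax : ∀ s ∈ μ.support, s.1 = P → (s.2.map Prod.snd).headD 0 ≤ e) :
    (derivRight R ^ k) μ (P, (i, e + k) :: T) = μ (P, (i, e) :: T) := by
  classical
  conv_lhs => rw [← Finsupp.sum_single μ]
  rw [map_finsuppSum, Finsupp.sum, Finsupp.finsetSum_apply, Finset.sum_eq_single (P, (i, e) :: T)]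
  · exact derivRight_pow_single_apply k P T i e _
  · intro s hs hne
    by_contra h
    obtain ⟨s', hs', h₁, hb, hw⟩ :=
      exists_of_mem_support_derivRight_pow (Finsupp.mem_support_iff.2 h)
    obtain rfl := Finset.mem_singleton.1 (Finsupp.support_single_subset hs')
    exact hne (Prod.ext h₁.symm (hb.eq_cons_of_weight_eq hw (hmax s' hs h₁.symm)))
  · intro h0
    rw [Finsupp.notMem_support_iff.1 h0, Finsupp.single_zero, map_zero, Finsupp.zero_apply]

/-- A raised exponent `K` larger than the weight of every left factor cannot sit in a left
factor, so it pins down where the split of the concatenation was. -/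
theorem eq_of_mem_support_derivRight_pow {μ : AdWord n × AdWord n →₀ R} {P T : AdWord n}
    {i : Fin n} {e K : ℕ} (hmin : ∀ s ∈ μ.support, P.length ≤ s.1.length)
    (hK : ∀ s ∈ μ.support, weight s.1 < K) {t : AdWord n × AdWord n}
    (ht : t ∈ ((derivRight R ^ K) μ).support) (hcat : t.1 ++ t.2 = P ++ (i, e + K) :: T) :
    t = (P, (i, e + K) :: T) := by
  obtain ⟨s, hs, h₁, -, -⟩ := exists_of_mem_support_derivRight_pow ht
  have hlen := h₁ ▸ hmin s hs
  rcases List.append_eq_append_iff.1 hcat with ⟨a, hP, h₂⟩ | ⟨c, h₁', hX⟩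
  · obtain rfl : a = [] := List.eq_nil_of_length_eq_zero (by
      have := congrArg List.length hP; simp only [List.length_append] at this; omega)
    simp only [List.append_nil, List.nil_append] at hP h₂
    exact Prod.ext hP.symm h₂
  · rcases c with _ | ⟨q, c⟩
    · simp only [List.append_nil, List.nil_append] at h₁' hX
      exact Prod.ext h₁' hX.symm
    · obtain ⟨rfl, -⟩ := List.cons_eq_cons.1 hX
      have := hK s hs
      rw [← h₁, h₁', weight_append, weight_cons] at this
      omega

theorem exists_concat_derivRight_pow_ne_zero {μ : AdWord n × AdWord n →₀ R} (hμ : μ ≠ 0) :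
    ∃ k, concat R ((derivRight R ^ k) μ) ≠ 0 := by
  classical
  obtain ⟨s₀, hs₀, hmin⟩ := μ.support.exists_min_image (fun s => s.1.length)
    (Finsupp.support_nonempty_iff.2 hμ)
  set short := μ.support.filter fun s => s.1.length = s₀.1.length
  by_cases hnil : ∃ s ∈ short, s.2 = []
  · obtain ⟨s, hs, hs₂⟩ := hnil
    obtain ⟨hs, hlen⟩ := Finset.mem_filter.1 hs
    refine ⟨0, fun h0 => Finsupp.mem_support_iff.1 hs ?_⟩
    rw [pow_zero, Module.End.one_apply] at h0
    rw [← concat_apply_of_unique (ν := μ), h0, Finsupp.zero_apply]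
    intro t ht hcat
    have := congrArg List.length hcat
    simp only [List.length_append, hs₂, List.length_nil] at this
    have ht₂ : t.2 = [] := List.eq_nil_of_length_eq_zero (by have := hmin t ht; omega)
    rw [ht₂, hs₂, List.append_nil, List.append_nil] at hcat
    exact Prod.ext hcat (ht₂.trans hs₂.symm)
  · push Not at hnil
    obtain ⟨st, hst, hmax⟩ := short.exists_max_image (fun s => (s.2.map Prod.snd).headD 0)
      ⟨s₀, Finset.mem_filter.2 ⟨hs₀, rfl⟩⟩
    obtain ⟨⟨i, e⟩, T, hT⟩ := List.exists_cons_of_ne_nil (hnil st hst)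
    obtain ⟨hst, hlen⟩ := Finset.mem_filter.1 hst
    set K := μ.support.sup (fun s => weight s.1) + 1
    refine ⟨K, fun h0 => Finsupp.mem_support_iff.1 hst ?_⟩
    have hval := concat_apply_of_unique (t₀ := (st.1, (i, e + K) :: T))
      fun t ht hcat => eq_of_mem_support_derivRight_pow (fun s hs => hlen ▸ hmin s hs)
        (fun s hs => Nat.lt_succ_of_le (Finset.le_sup (f := fun s => weight s.1) hs)) ht hcat
    rw [h0, Finsupp.zero_apply, derivRight_pow_apply_cons_add K fun s hs hs₁ => ?_] at hval
    · rwa [← hT, eq_comm] at hval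
    · simpa [hT] using hmax s (Finset.mem_filter.2 ⟨hs, hs₁ ▸ hlen⟩)

noncomputable def layer (i : Fin n) (c : ℕ) (ν : AdWord n →₀ R) : AdWord n × AdWord n →₀ R :=
  (ν.filter fun w => expOf i w = c).mapDomain (cut i)

theorem exists_of_mem_support_layer {i : Fin n} {c : ℕ} {ν : AdWord n →₀ R}
    {t : AdWord n × AdWord n} (ht : t ∈ (layer i c ν).support) :
    ∃ w ∈ ν.support, expOf i w = c ∧ cut i w = t := by
  classical
  obtain ⟨w, hw, rfl⟩ := Finset.mem_image.1 (Finsupp.mapDomain_support ht)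
  rw [Finsupp.support_filter, Finset.mem_filter] at hw
  exact ⟨w, hw.1, hw.2, rfl⟩

theorem layer_ne_zero {i : Fin n} {ν : AdWord n →₀ R} (hi : ∀ w ∈ ν.support, i ∈ w.map Prod.fst)
    {w₀ : AdWord n} (hw₀ : w₀ ∈ ν.support) : layer i (expOf i w₀) ν ≠ 0 := by
  set S := {w : AdWord n | i ∈ w.map Prod.fst ∧ expOf i w = expOf i w₀}
  have hinj : Set.InjOn (cut i) S := fun w hw w' hw' h => by
    rw [eq_cut_append hw.1, eq_cut_append hw'.1, hw.2, hw'.2, h]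
  intro h0
  have := Finsupp.mapDomain_apply' S (ν.filter fun w => expOf i w = expOf i w₀)
    (fun w hw => ?_) hinj (a := w₀) ⟨hi w₀ hw₀, rfl⟩
  · rw [← layer, h0, Finsupp.zero_apply,
      Finsupp.filter_apply_pos (fun w => expOf i w = expOf i w₀) _ rfl] at this
    exact Finsupp.mem_support_iff.1 hw₀ this.symm
  · rw [Finset.mem_coe, Finsupp.support_filter, Finset.mem_filter] at hw
    exact ⟨hi w hw.1, hw.2⟩

theorem Enumerates.of_mem_support_layer {s : Finset (Fin n)} {i : Fin n} (hi : i ∈ s) {r c : ℕ}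
    {ν : AdWord n →₀ R} (hν : ∀ w ∈ ν.support, Enumerates s w ∧ weight w = r)
    {t : AdWord n × AdWord n} (ht : t ∈ (layer i c ν).support) :
    Enumerates (s.erase i) (t.1 ++ t.2) ∧ weight (t.1 ++ t.2) + c = r := by
  obtain ⟨w, hw, rfl, rfl⟩ := exists_of_mem_support_layer ht
  obtain ⟨hs, hr⟩ := hν w hw
  have hsplit := eq_cut_append (hs.mem_map_fst hi)
  rw [hsplit] at hs hr
  refine ⟨hs.erase, ?_⟩
  rw [← hr, weight_append, weight_append, weight_cons]
  ring

theorem evalLin_update_eq_sandwich {s : Finset (Fin n)} {i : Fin n} (hi : i ∈ s)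
    {ν : AdWord n →₀ R} (hν : ∀ w ∈ ν.support, Enumerates s w) {c : ℕ}
    (hc : ∀ w ∈ ν.support, c ≤ expOf i w) {g : A} {k : ℕ} (hg : (adE v)^[c] g = v ^ k)
    (hg' : ∀ e, c < e → (adE v)^[e] g = 0) :
    evalLin R v (Function.update x i g) ν = sandwich R v x k (layer i c ν) := by
  classical
  rw [layer, sandwich, Finsupp.linearCombination_mapDomain, evalLin,
    Finsupp.linearCombination_apply, Finsupp.linearCombination_apply, Finsupp.sum, Finsupp.sum,
    Finsupp.support_filter, Finset.sum_filter]
  refine Finset.sum_congr rfl fun w hw => ?_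
  rw [eval_update_of_enumerates v x hi (hν w hw)]
  split_ifs with hwc
  · rw [Finsupp.filter_apply_pos (fun w => expOf i w = c) _ hwc, hwc, hg]
    rfl
  · rw [hg' _ (lt_of_le_of_ne (hc w hw) (Ne.symm hwc)), zero_mul, mul_zero, smul_zero]

end Linear

section Field

variable {F : Type*} [Field F] {A : Type*} [Ring A] [Algebra F A] {v a : A}

theorem exists_evalLin_eq_of_singleton (ha : ∀ k, ∃ y, (adE v)^[k] y = a) {i : Fin n} {r : ℕ}
    {ν : AdWord n →₀ F} (hν0 : ν ≠ 0) (hν : ∀ w ∈ ν.support, Enumerates {i} w ∧ weight w = r) :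
    ∃ x, evalLin F v x ν = a := by
  have hsupp : ν.support ⊆ {[(i, r)]} := fun w hw => by
    rw [Finset.mem_singleton, (hν w hw).1.eq_singleton, (hν w hw).2]
  obtain ⟨κ, rfl⟩ : ∃ κ, ν = Finsupp.single [(i, r)] κ :=
    ⟨_, Finsupp.support_subset_singleton.1 hsupp⟩
  have hκ : κ ≠ 0 := by rintro rfl; exact hν0 (Finsupp.single_zero _)
  obtain ⟨y, hy⟩ := ha r
  refine ⟨fun _ => κ⁻¹ • y, ?_⟩
  simp [evalLin, adE_iterate_smul, hy, smul_smul, hκ]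

theorem exists_evalLin_eq_of_erase (hv : ∀ c, ∃ z, (adE v)^[c] z = 1) {s : Finset (Fin n)}
    {i : Fin n} (hi : i ∈ s)
    (ih : ∀ (r : ℕ) (ν : AdWord n →₀ F), ν ≠ 0 →
      (∀ w ∈ ν.support, Enumerates (s.erase i) w ∧ weight w = r) → ∃ x, evalLin F v x ν = a)
    {r : ℕ} {ν : AdWord n →₀ F} (hν0 : ν ≠ 0)
    (hν : ∀ w ∈ ν.support, Enumerates s w ∧ weight w = r) :
    ∃ x, evalLin F v x ν = a := by
  classical
  obtain ⟨w₀, hw₀, hmin⟩ := ν.support.exists_min_image (expOf i)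
    (Finsupp.support_nonempty_iff.2 hν0)
  set c := expOf i w₀
  set μ := layer i c ν
  have hμ : μ ≠ 0 := layer_ne_zero (fun w hw => (hν w hw).1.mem_map_fst hi) hw₀
  have hex := exists_concat_derivRight_pow_ne_zero hμ
  set k := Nat.find hex
  obtain ⟨x, hx⟩ := ih (r - c + k) _ (Nat.find_spec hex) fun w hw => by
    obtain ⟨t, ht, hb, hwt⟩ := exists_of_mem_support_concat_derivRight_pow hw
    obtain ⟨hs, hr⟩ := Enumerates.of_mem_support_layer hi hν ht
    exact ⟨hs.of_below hb, by omega⟩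
  obtain ⟨z, hz⟩ := hv c
  obtain ⟨hg, hg'⟩ := adE_iterate_pow_mul hz k
  refine ⟨Function.update x i (v ^ k * z), ?_⟩
  rw [evalLin_update_eq_sandwich v x hi (fun w hw => (hν w hw).1) hmin hg hg',
    sandwich_eq_evalLin_concat v x fun j hj => not_not.1 (Nat.find_min hex hj), hx]

theorem exists_evalLin_eq (hv : ∀ c, ∃ z, (adE v)^[c] z = 1) (ha : ∀ k, ∃ y, (adE v)^[k] y = a)
    {s : Finset (Fin n)} (hs : s.Nonempty) (r : ℕ) (ν : AdWord n →₀ F) (hν0 : ν ≠ 0)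
    (hν : ∀ w ∈ ν.support, Enumerates s w ∧ weight w = r) :
    ∃ x, evalLin F v x ν = a := by
  classical
  induction hs using Finset.Nonempty.cons_induction generalizing r ν with
  | singleton i => exact exists_evalLin_eq_of_singleton ha hν0 hν
  | cons i s hi _ ih =>
    exact exists_evalLin_eq_of_erase hv (Finset.mem_cons_self i s)
      (by rwa [Finset.erase_cons]) hν0 hν

end Field

section PermWord

def permWord (σ : Equiv.Perm (Fin n)) (b : Fin n → ℕ) : AdWord n :=
  List.ofFn fun j => (σ j, b (σ j))

theorem permWord_injective :
    Function.Injective fun p : Equiv.Perm (Fin n) × (Fin n → ℕ) => permWord p.1 p.2 := by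
  rintro ⟨σ, b⟩ ⟨τ, d⟩ h
  have h' := List.ofFn_inj.1 h
  have hστ : σ = τ := Equiv.ext fun j => congrArg Prod.fst (congrFun h' j)
  subst hστ
  refine Prod.ext rfl (funext fun i => ?_)
  simpa using congrArg Prod.snd (congrFun h' (σ.symm i))

theorem enumerates_permWord (σ : Equiv.Perm (Fin n)) (b : Fin n → ℕ) :
    Enumerates Finset.univ (permWord σ b) := by
  refine ⟨?_, ?_⟩ <;> simp only [permWord, List.map_ofFn, Function.comp_def]
  · exact List.nodup_ofFn.2 σ.injective
  · ext j
    simpa using ⟨σ.symm j, σ.apply_symm_apply j⟩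

theorem weight_permWord (σ : Equiv.Perm (Fin n)) (b : Fin n → ℕ) :
    weight (permWord σ b) = ∑ j, b j := by
  simp only [weight, permWord, List.map_ofFn, List.sum_ofFn, Function.comp_def]
  exact Equiv.sum_comp σ b

theorem eval_permWord {A : Type*} [Ring A] (v : A) (x : Fin n → A) (σ : Equiv.Perm (Fin n))
    (b : Fin n → ℕ) :
    eval v x (permWord σ b) = (List.ofFn fun j => (adE v)^[b (σ j)] (x (σ j))).prod := by
  simp only [eval, permWord, List.map_ofFn, Function.comp_def]

variable {R : Type*} [CommSemiring R]

noncomputable def pcPoly (lam : Equiv.Perm (Fin n) → (Fin n → ℕ) → R) (r : ℕ) : AdWord n →₀ R :=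
  ∑ p ∈ Finset.univ ×ˢ Finset.Nat.antidiagonalTuple n r,
    Finsupp.single (permWord p.1 p.2) (lam p.1 p.2)

theorem pcPoly_ne_zero {lam : Equiv.Perm (Fin n) → (Fin n → ℕ) → R} {r : ℕ}
    (hlam : ∃ σ, ∃ b ∈ Finset.Nat.antidiagonalTuple n r, lam σ b ≠ 0) : pcPoly lam r ≠ 0 := by
  classical
  obtain ⟨σ, b, hb, hlam⟩ := hlam
  refine fun h0 => hlam ?_
  rw [← Finsupp.zero_apply (a := permWord σ b), ← h0, pcPoly, Finsupp.finsetSum_apply,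
    Finset.sum_eq_single_of_mem (σ, b) (Finset.mem_product.2 ⟨Finset.mem_univ σ, hb⟩)]
  · exact Finsupp.single_eq_same.symm
  · intro p _ hp
    rw [Finsupp.single_apply, if_neg fun h => hp (permWord_injective h)]

theorem Enumerates.of_mem_support_pcPoly {lam : Equiv.Perm (Fin n) → (Fin n → ℕ) → R} {r : ℕ}
    {w : AdWord n} (hw : w ∈ (pcPoly lam r).support) : Enumerates Finset.univ w ∧ weight w = r := by
  classical
  obtain ⟨p, hp, hw⟩ := Finset.mem_biUnion.1 (Finsupp.support_finsetSum hw)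
  obtain rfl := Finset.mem_singleton.1 (Finsupp.support_single_subset hw)
  exact ⟨enumerates_permWord _ _, (weight_permWord _ _).trans
    (Finset.Nat.mem_antidiagonalTuple.1 (Finset.mem_product.1 hp).2)⟩

theorem evalLin_pcPoly {A : Type*} [Ring A] [Algebra R A] (v : A) (x : Fin n → A)
    (lam : Equiv.Perm (Fin n) → (Fin n → ℕ) → R) (r : ℕ) :
    evalLin R v x (pcPoly lam r) =
      ∑ σ : Equiv.Perm (Fin n), ∑ b ∈ Finset.Nat.antidiagonalTuple n r,
        lam σ b • (List.ofFn fun j => (adE v)^[b (σ j)] (x (σ j))).prod := by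
  simp only [pcPoly, map_sum, Finset.sum_product, evalLin, Finsupp.linearCombination_single,
    eval_permWord]

end PermWord

end AdWord

open AdWord in
/-- Main theorem, type one: if `1 ∈ [v,A]_k` for every `k ≥ 1`, then `A_∞(v)` is
contained in the image of every nonzero admissible partially commutative
polynomial of type one. -/
theorem stmt_18 (F : Type*) [Field F] (A : Type*) [Ring A] [Algebra F A]
    (v : A) (hv : ∀ k : ℕ, 1 ≤ k → ∃ z : A, (adE v)^[k] z = 1)
    (n : ℕ) (hn : 1 ≤ n) (r : ℕ)
    (lam : Equiv.Perm (Fin n) → (Fin n → ℕ) → F)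
    (hlam : ∃ σ, ∃ b ∈ Finset.Nat.antidiagonalTuple n r, lam σ b ≠ 0)
    (a : A) (ha : ∀ k : ℕ, 1 ≤ k → ∃ x : A, (adE v)^[k] x = a) :
    ∃ x : Fin n → A,
      a = ∑ σ : Equiv.Perm (Fin n), ∑ b ∈ Finset.Nat.antidiagonalTuple n r,
        lam σ b • (List.ofFn fun j => (adE v)^[b (σ j)] (x (σ j))).prod := by
  have hv' : ∀ c, ∃ z, (adE v)^[c] z = 1 := fun c =>
    c.eq_zero_or_pos.elim (fun hc => ⟨1, hc ▸ rfl⟩) (hv c)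
  have ha' : ∀ k, ∃ y, (adE v)^[k] y = a := fun k =>
    k.eq_zero_or_pos.elim (fun hk => ⟨a, hk ▸ rfl⟩) (ha k)
  obtain ⟨x, hx⟩ := exists_evalLin_eq hv' ha' (Finset.univ_nonempty_iff.2 ⟨⟨0, hn⟩⟩) r
    (pcPoly lam r) (pcPoly_ne_zero hlam) fun _ => Enumerates.of_mem_support_pcPoly
  exact ⟨x, by rw [← hx, evalLin_pcPoly]⟩
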